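/- arXiv:2209.06763 — 8 statements merged into one kernel-verified Lean document; each statement's English description precedes it below -/
import Mathlib

section
/- Let p be a prime and n, d ∈ ℕ. Let τ₁, …, τₙ be vectors in ℚₚ^d (with the bilinear form ⟨(aⱼ),(bⱼ)⟩ = Σⱼ aⱼbⱼ). Suppose there exists b ∈ ℚₚ such that Σⱼ ⟨x, τⱼ⟩ τⱼ = b x for all x ∈ ℚₚ^d. Then |Σⱼ ⟨τⱼ, τⱼ⟩|ₚ² ≤ |d|ₚ · max over pairs 1 ≤ j, k ≤ n with j ≠ k of the quantities |Σₗ ⟨τₗ, τₗ⟩²|ₚ and |⟨τⱼ, τₖ⟩|ₚ², where |·|ₚ denotes the p-adic absolute value. -/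
open Finset

/-- First order p-adic Welch bound (trace inequality form). -/
theorem padic_welch_first_order_general (p : ℕ) [Fact p.Prime] (n d : ℕ) (hn : 1 < n)
    (τ : Fin n → Fin d → ℚ_[p]) (b : ℚ_[p])
    (hb : ∀ x : Fin d → ℚ_[p], ∑ j, (∑ i, x i * τ j i) • τ j = b • x) :
    ∃ j k : Fin n, j ≠ k ∧
      ‖∑ j, ∑ i, τ j i * τ j i‖ ^ 2 ≤
        ‖(d : ℚ_[p])‖ *
          max ‖∑ l, (∑ i, τ l i * τ l i) ^ 2‖ (‖∑ i, τ j i * τ k i‖ ^ 2) := by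
  haveI : NeZero n := ⟨by omega⟩
  -- Gram-type identity from the frame condition
  have key : ∀ i m : Fin d, ∑ j, τ j i * τ j m = b * (if m = i then 1 else 0) := by
    intro i m
    have h := congrFun (hb (Pi.single i 1)) m
    simpa [Finset.sum_apply, Pi.smul_apply, smul_eq_mul, Pi.single_apply,
      Finset.sum_ite_eq'] using h
  set T := ∑ j, ∑ i, τ j i * τ j i with hTdef
  have hT : T = (d : ℚ_[p]) * b := by
    rw [hTdef, Finset.sum_comm]
    simp [key]
  set S2 := ∑ j, ∑ k, (∑ i, τ j i * τ k i) ^ 2 with hS2def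
  have hS2 : S2 = (d : ℚ_[p]) * b ^ 2 := by
    have e1 : ∀ j k : Fin n, (∑ i, τ j i * τ k i) ^ 2
        = ∑ i, ∑ m, τ j i * τ j m * (τ k i * τ k m) := by
      intro j k
      rw [sq, Finset.sum_mul_sum]
      exact Finset.sum_congr rfl fun i _ => Finset.sum_congr rfl fun m _ => by ring
    calc S2 = ∑ j, ∑ k, ∑ i, ∑ m, τ j i * τ j m * (τ k i * τ k m) := by
            rw [hS2def]
            exact Finset.sum_congr rfl fun j _ => Finset.sum_congr rfl fun k _ => e1 j k
      _ = ∑ j, ∑ i, ∑ k, ∑ m, τ j i * τ j m * (τ k i * τ k m) :=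
            Finset.sum_congr rfl fun j _ => Finset.sum_comm
      _ = ∑ i, ∑ j, ∑ k, ∑ m, τ j i * τ j m * (τ k i * τ k m) := Finset.sum_comm
      _ = ∑ i, ∑ j, ∑ m, ∑ k, τ j i * τ j m * (τ k i * τ k m) :=
            Finset.sum_congr rfl fun i _ => Finset.sum_congr rfl fun j _ => Finset.sum_comm
      _ = ∑ i, ∑ m, ∑ j, ∑ k, τ j i * τ j m * (τ k i * τ k m) :=
            Finset.sum_congr rfl fun i _ => Finset.sum_comm
      _ = ∑ i, ∑ m, (∑ j, τ j i * τ j m) * (∑ k, τ k i * τ k m) := by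
            refine Finset.sum_congr rfl fun i _ => Finset.sum_congr rfl fun m _ => ?_
            rw [Finset.sum_mul_sum]
      _ = (d : ℚ_[p]) * b ^ 2 := by
            simp only [key]
            simp [mul_ite, ite_mul, sq]
  have hTS : T ^ 2 = (d : ℚ_[p]) * S2 := by
    rw [hT, hS2]; ring
  have hnorm : ‖T‖ ^ 2 = ‖(d : ℚ_[p])‖ * ‖S2‖ := by
    rw [← norm_pow, hTS, norm_mul]
  -- split S2 into diagonal and off-diagonal parts
  set D := ∑ l, (∑ i, τ l i * τ l i) ^ 2 with hDdef
  set R := ∑ j : Fin n, ∑ k ∈ Finset.univ.erase j, (∑ i, τ j i * τ k i) ^ 2 with hRdef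
  have hsplit : S2 = D + R := by
    rw [hS2def, hDdef, hRdef, ← Finset.sum_add_distrib]
    refine Finset.sum_congr rfl fun j _ => ?_
    exact (Finset.add_sum_erase _ _ (Finset.mem_univ j)).symm
  -- find the dominating off-diagonal term
  have hRsig : R = ∑ q ∈ Finset.univ.sigma (fun j : Fin n => Finset.univ.erase j),
      (∑ i, τ q.1 i * τ q.2 i) ^ 2 := by
    rw [hRdef, Finset.sum_sigma]
  have hne : (Finset.univ.sigma (fun j : Fin n => Finset.univ.erase j)).Nonempty := by
    refine ⟨⟨0, 1⟩, ?_⟩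
    simp only [Finset.mem_sigma, Finset.mem_univ, Finset.mem_erase, true_and, and_true]
    exact fun h => by
      have := congrArg Fin.val h
      simp [Fin.val_one, Nat.mod_eq_of_lt hn] at this
  obtain ⟨q, hq, hqle⟩ := IsUltrametricDist.exists_norm_finset_sum_le_of_nonempty hne
    (fun q : Σ _ : Fin n, Fin n => (∑ i, τ q.1 i * τ q.2 i) ^ 2)
  simp only [Finset.mem_sigma, Finset.mem_univ, Finset.mem_erase, true_and] at hq
  refine ⟨q.1, q.2, fun h => hq.1 h.symm, ?_⟩
  have hRle : ‖R‖ ≤ ‖∑ i, τ q.1 i * τ q.2 i‖ ^ 2 := by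
    rw [hRsig]
    calc ‖∑ q ∈ Finset.univ.sigma (fun j : Fin n => Finset.univ.erase j),
        (∑ i, τ q.1 i * τ q.2 i) ^ 2‖ ≤ ‖(∑ i, τ q.1 i * τ q.2 i) ^ 2‖ := hqle
      _ = ‖∑ i, τ q.1 i * τ q.2 i‖ ^ 2 := norm_pow _ _
  have hS2le : ‖S2‖ ≤ max ‖D‖ (‖∑ i, τ q.1 i * τ q.2 i‖ ^ 2) := by
    rw [hsplit]
    exact (Padic.nonarchimedean _ _).trans (max_le_max le_rfl hRle)
  calc ‖T‖ ^ 2 = ‖(d : ℚ_[p])‖ * ‖S2‖ := hnorm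
    _ ≤ ‖(d : ℚ_[p])‖ * max ‖D‖ (‖∑ i, τ q.1 i * τ q.2 i‖ ^ 2) :=
        mul_le_mul_of_nonneg_left hS2le (norm_nonneg _)
end

section
/- Let p be a prime, n, d ∈ ℕ. Let τ₁, …, τₙ ∈ ℚₚ^d satisfy ⟨τⱼ, τⱼ⟩ = 1 for all j, and suppose there exists b ∈ ℚₚ with Σⱼ ⟨x, τⱼ⟩ τⱼ = b x for all x ∈ ℚₚ^d. Then max over pairs j ≠ k of { |n|ₚ, |⟨τⱼ, τₖ⟩|ₚ² } ≥ |n|ₚ² / |d|ₚ (the first-order p-adic Welch bound). -/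
open Finset

/-- First order p-adic Welch bound. -/
theorem padic_welch_first_order (p : ℕ) [Fact p.Prime] (n d : ℕ) (hn : 1 < n)
    (τ : Fin n → Fin d → ℚ_[p])
    (hτ : ∀ j, (∑ i, τ j i * τ j i) = 1) (b : ℚ_[p])
    (hb : ∀ x : Fin d → ℚ_[p], ∑ j, (∑ i, x i * τ j i) • τ j = b • x) :
    ∃ j k : Fin n, j ≠ k ∧
      ‖(n : ℚ_[p])‖ ^ 2 / ‖(d : ℚ_[p])‖ ≤
        max ‖(n : ℚ_[p])‖ (‖∑ i, τ j i * τ k i‖ ^ 2) := by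
  have hn0 : (n : ℚ_[p]) ≠ 0 := Nat.cast_ne_zero.mpr (by omega)
  obtain ⟨k0, k1, hkne⟩ : ∃ k0 k1 : Fin n, k1 ≠ k0 :=
    ⟨⟨0, by omega⟩, ⟨1, by omega⟩, Fin.ne_of_val_ne (by norm_num)⟩
  by_cases hcase : ‖(n : ℚ_[p])‖ ^ 2 / ‖(d : ℚ_[p])‖ ≤ ‖(n : ℚ_[p])‖
  · exact ⟨k1, k0, hkne, le_max_of_le_left hcase⟩
  push_neg at hcase
  have hdnat : d ≠ 0 := by
    rintro rfl
    have := hτ k0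
    simp at this
  have hd0 : (d : ℚ_[p]) ≠ 0 := Nat.cast_ne_zero.mpr hdnat
  have key : ∀ x : Fin d → ℚ_[p], ∀ i,
      ∑ j, (∑ i', x i' * τ j i') * τ j i = b * x i := by
    intro x i
    have := congrFun (hb x) i
    simpa [Finset.sum_apply, Pi.smul_apply, smul_eq_mul] using this
  -- trace identity : n = b * d
  have h1 : (n : ℚ_[p]) = b * d := by
    have hs : ∀ i : Fin d,
        ∑ j, (∑ i', (if i' = i then (1:ℚ_[p]) else 0) * τ j i') * τ j i = b := by
      intro i
      have := key (fun i' => if i' = i then (1:ℚ_[p]) else 0) i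
      simpa [ite_mul] using this
    have h : (∑ i : Fin d, ∑ j, (∑ i', (if i' = i then (1:ℚ_[p]) else 0) * τ j i') * τ j i)
        = ∑ _i : Fin d, b := Finset.sum_congr rfl fun i _ => hs i
    rw [Finset.sum_comm] at h
    have hL : ∑ j, ∑ i : Fin d, (∑ i', (if i' = i then (1:ℚ_[p]) else 0) * τ j i') * τ j i
        = (n : ℚ_[p]) := by
      have hone : ∀ (j : Fin n) (i : Fin d),
          (∑ i', (if i' = i then (1:ℚ_[p]) else 0) * τ j i') = τ j i := by
        intro j i
        simp [ite_mul]
      rw [show ((n : ℚ_[p])) = ∑ _j : Fin n, (1:ℚ_[p]) by simp]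
      refine Finset.sum_congr rfl fun j _ => ?_
      calc ∑ i, (∑ i', (if i' = i then (1:ℚ_[p]) else 0) * τ j i') * τ j i
          = ∑ i, τ j i * τ j i := Finset.sum_congr rfl fun i _ => by rw [hone j i]
        _ = 1 := hτ j
    rw [hL] at h
    rw [h]
    simp [mul_comm]
  -- frame identity at k0
  set c : Fin n → ℚ_[p] := fun j => ∑ i, τ k0 i * τ j i with hc
  have h2 : ∑ j, c j ^ 2 = b := by
    have hs : ∀ i, ∑ j, c j * τ j i = b * τ k0 i := fun i => key (τ k0) i
    have h : ∑ i, (∑ j, c j * τ j i) * τ k0 i = ∑ i, (b * τ k0 i) * τ k0 i :=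
      Finset.sum_congr rfl fun i _ => by rw [hs i]
    rw [show ∑ i, (∑ j, c j * τ j i) * τ k0 i = ∑ j, c j ^ 2 by
        simp_rw [Finset.sum_mul, mul_assoc]
        rw [Finset.sum_comm]
        refine Finset.sum_congr rfl fun j _ => ?_
        rw [← Finset.mul_sum, sq]
        congr 1
        exact Finset.sum_congr rfl fun i _ => mul_comm _ _] at h
    rw [h, show ∑ i, (b * τ k0 i) * τ k0 i = b * ∑ i, τ k0 i * τ k0 i by
        rw [Finset.mul_sum]; exact Finset.sum_congr rfl fun i _ => by ring]
    rw [hτ k0, mul_one]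
  have hnpos : 0 < ‖(n : ℚ_[p])‖ := norm_pos_iff.mpr hn0
  have hdpos : 0 < ‖(d : ℚ_[p])‖ := norm_pos_iff.mpr hd0
  have hdlt : ‖(d : ℚ_[p])‖ < ‖(n : ℚ_[p])‖ := by
    rw [lt_div_iff₀ hdpos, sq] at hcase
    exact lt_of_mul_lt_mul_left hcase hnpos.le
  have hbnorm : ‖b‖ = ‖(n : ℚ_[p])‖ / ‖(d : ℚ_[p])‖ := by
    have : b = (n : ℚ_[p]) / d := by field_simp [h1]; exact h1.symm
    rw [this, norm_div]
  have hb1 : 1 < ‖b‖ := by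
    rw [hbnorm, lt_div_iff₀ hdpos, one_mul]
    exact hdlt
  have hck : c k0 = 1 := hτ k0
  have h3 : ∑ j ∈ univ.erase k0, c j ^ 2 = b - 1 := by
    have h : c k0 ^ 2 + ∑ j ∈ univ.erase k0, c j ^ 2 = b := by
      rw [← h2]
      exact Finset.add_sum_erase univ (fun j => c j ^ 2) (mem_univ k0)
    rw [hck] at h
    linear_combination h
  have hbm1 : ‖b‖ ≤ ‖b - 1‖ := by
    have h := IsUltrametricDist.norm_add_le_max (b - 1) 1
    rw [sub_add_cancel] at h
    rcases max_cases ‖b - 1‖ ‖(1:ℚ_[p])‖ with ⟨he, _⟩ | ⟨he, hlt⟩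
    · rwa [he] at h
    · rw [he, norm_one] at h; linarith
  have hne : (univ.erase k0).Nonempty := ⟨k1, Finset.mem_erase.mpr ⟨hkne, mem_univ _⟩⟩
  obtain ⟨j, hjmem, hjle⟩ :=
    IsUltrametricDist.exists_norm_finset_sum_le_of_nonempty hne (fun j => c j ^ 2)
  rw [h3] at hjle
  refine ⟨j, k0, (Finset.mem_erase.mp hjmem).1, le_max_of_le_right ?_⟩
  have heq : (∑ i, τ j i * τ k0 i) = c j := by
    rw [hc]; exact Finset.sum_congr rfl fun i _ => mul_comm _ _
  rw [heq]
  have hle1 : ‖(n : ℚ_[p])‖ ≤ 1 := by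
    have := Padic.norm_int_le_one (p := p) (n : ℤ)
    simpa using this
  calc ‖(n : ℚ_[p])‖ ^ 2 / ‖(d : ℚ_[p])‖
      ≤ ‖(n : ℚ_[p])‖ / ‖(d : ℚ_[p])‖ := by gcongr; nlinarith
    _ = ‖b‖ := hbnorm.symm
    _ ≤ ‖b - 1‖ := hbm1
    _ ≤ ‖c j ^ 2‖ := hjle
    _ = ‖c j‖ ^ 2 := norm_pow _ _
end

section
/- Let p be a prime and let τ₁, …, τₙ ∈ ℚₚ^d satisfy Σⱼ ⟨x, τⱼ⟩ τⱼ = b x for all x ∈ ℚₚ^d for some b ∈ ℚₚ. Then |Σⱼ ⟨τⱼ, τⱼ⟩|ₚ² = |d|ₚ · |Σⱼ Σₖ ⟨τⱼ, τₖ⟩²|ₚ. -/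
open Finset

/-- `|Σⱼ ⟨τⱼ, τⱼ⟩|ₚ² = |d|ₚ · |Σⱼ Σₖ ⟨τⱼ, τₖ⟩²|ₚ` for a tight family. -/
theorem padic_frame_norm_trace_eq (p : ℕ) [Fact p.Prime] (n d : ℕ)
    (τ : Fin n → Fin d → ℚ_[p]) (b : ℚ_[p])
    (hb : ∀ x : Fin d → ℚ_[p], ∑ j, (∑ i, x i * τ j i) • τ j = b • x) :
    ‖∑ j, ∑ i, τ j i * τ j i‖ ^ 2 =
      ‖(d : ℚ_[p])‖ * ‖∑ j, ∑ k, (∑ i, τ j i * τ k i) ^ 2‖ := by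
  -- coordinatewise form of the frame identity
  have hco : ∀ (x : Fin d → ℚ_[p]) (l : Fin d),
      ∑ j, (∑ i, x i * τ j i) * τ j l = b * x l := by
    intro x l
    have := congrFun (hb x) l
    simpa [Finset.sum_apply, smul_eq_mul] using this
  -- first trace identity
  have h1 : ∀ i : Fin d, ∑ j, τ j i * τ j i = b := by
    intro i
    have := hco (Pi.single i 1) i
    simpa [Pi.single_apply, Finset.mul_sum, mul_ite, ite_mul] using this
  have h2 : ∑ j, ∑ i, τ j i * τ j i = b * d := by
    rw [Finset.sum_comm]
    simp [h1, mul_comm]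
  -- second trace identity
  have h3 : ∑ j, ∑ k, (∑ i, τ j i * τ k i) ^ 2 = b * (b * d) := by
    have key : ∀ k : Fin n, ∑ j, (∑ i, τ j i * τ k i) ^ 2 = b * ∑ l, τ k l * τ k l := by
      intro k
      calc ∑ j, (∑ i, τ j i * τ k i) ^ 2
          = ∑ j, ∑ l, (∑ i, τ k i * τ j i) * τ j l * τ k l := by
            refine Finset.sum_congr rfl fun j _ => ?_
            rw [sq]
            rw [show (∑ i, τ j i * τ k i) = ∑ i, τ k i * τ j i from
              Finset.sum_congr rfl fun i _ => mul_comm _ _]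
            rw [Finset.mul_sum]
            exact Finset.sum_congr rfl fun l _ => by ring
        _ = ∑ l, (∑ j, (∑ i, τ k i * τ j i) * τ j l) * τ k l := by
            rw [Finset.sum_comm]
            exact Finset.sum_congr rfl fun l _ => (Finset.sum_mul _ _ _).symm
        _ = ∑ l, (b * τ k l) * τ k l := by
            exact Finset.sum_congr rfl fun l _ => by rw [hco (τ k) l]
        _ = b * ∑ l, τ k l * τ k l := by
            rw [Finset.mul_sum]; exact Finset.sum_congr rfl fun l _ => by ring
    calc ∑ j, ∑ k, (∑ i, τ j i * τ k i) ^ 2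
        = ∑ k, ∑ j, (∑ i, τ j i * τ k i) ^ 2 := Finset.sum_comm
      _ = ∑ k, b * ∑ l, τ k l * τ k l := Finset.sum_congr rfl fun k _ => key k
      _ = b * ∑ k, ∑ l, τ k l * τ k l := (Finset.mul_sum _ _ _).symm
      _ = b * (b * d) := by rw [h2]
  rw [h2, h3]
  rw [norm_mul, norm_mul, norm_mul]
  ring
end

section
/- Let p be a prime, n, d, m ∈ ℕ. Let τ₁, …, τₙ ∈ ℚₚ^d and suppose there exists b ∈ ℚₚ such that Σⱼ ⟨x, τⱼ^{⊗m}⟩ τⱼ^{⊗m} = b x for all x in Sym^m(ℚₚ^d), the space of symmetric m-tensors. Then |Σⱼ ⟨τⱼ, τⱼ⟩^m|ₚ² ≤ |C(d+m-1, m)|ₚ · max over pairs j ≠ k of { |Σₗ ⟨τₗ, τₗ⟩^{2m}|ₚ, |⟨τⱼ, τₖ⟩|ₚ^{2m} }. -/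
open Finset

private lemma padic_norm_sum_le {p : ℕ} [Fact p.Prime] {ι : Type*} (s : Finset ι)
    (f : ι → ℚ_[p]) (C : ℝ) (hC : 0 ≤ C) (h : ∀ i ∈ s, ‖f i‖ ≤ C) :
    ‖∑ i ∈ s, f i‖ ≤ C := by
  classical
  induction s using Finset.cons_induction with
  | empty => simpa using hC
  | cons a s ha ih =>
    rw [Finset.sum_cons]
    refine (Padic.nonarchimedean _ _).trans (max_le ?_ ?_)
    · exact h a (Finset.mem_cons_self a s)
    · exact ih fun i hi => h i (Finset.mem_cons_of_mem hi)

/-- Higher order p-adic Welch bound (trace inequality form). `V` plays the role of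
`Sym^m(ℚₚ^d)`, of dimension `C(d+m-1, m)`, `B` the induced bilinear form and `T`
the `m`-th tensor power map, satisfying `⟨u^{⊗m}, v^{⊗m}⟩ = ⟨u, v⟩^m`. -/
theorem padic_welch_higher_order_general (p : ℕ) [Fact p.Prime] (n d m : ℕ) (hn : 1 < n)
    (V : Type*) [AddCommGroup V] [Module ℚ_[p] V] [FiniteDimensional ℚ_[p] V]
    (hV : Module.finrank ℚ_[p] V = (d + m - 1).choose m)
    (B : LinearMap.BilinForm ℚ_[p] V) (T : (Fin d → ℚ_[p]) → V)
    (hT : ∀ u v : Fin d → ℚ_[p], B (T u) (T v) = (∑ i, u i * v i) ^ m)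
    (τ : Fin n → Fin d → ℚ_[p]) (b : ℚ_[p])
    (hb : ∀ x : V, ∑ j, B x (T (τ j)) • T (τ j) = b • x) :
    ∃ j k : Fin n, j ≠ k ∧
      ‖∑ j, (∑ i, τ j i * τ j i) ^ m‖ ^ 2 ≤
        ‖((d + m - 1).choose m : ℚ_[p])‖ *
          max ‖∑ l, (∑ i, τ l i * τ l i) ^ (2 * m)‖ (‖∑ i, τ j i * τ k i‖ ^ (2 * m)) := by
  classical
  set w : Fin n → V := fun j => T (τ j) with hw
  set A : ℚ_[p] := ∑ j, (∑ i, τ j i * τ j i) ^ m with hA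
  set N : ℚ_[p] := ((d + m - 1).choose m : ℚ_[p]) with hN
  set f : Fin n → Fin n → ℚ_[p] := fun j k => (∑ i, τ j i * τ k i) ^ (2 * m) with hf
  have hsymm : ∀ j k, (∑ i, τ k i * τ j i) = (∑ i, τ j i * τ k i) := by
    intro j k; exact Finset.sum_congr rfl fun i _ => mul_comm _ _
  -- trace identity: A = b * N
  have hS : (∑ j, (dualTensorHom ℚ_[p] V V (B.flip (w j) ⊗ₜ[ℚ_[p]] w j)))
      = b • (LinearMap.id : V →ₗ[ℚ_[p]] V) := by
    ext x
    simpa [dualTensorHom_apply] using hb x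
  have htr : A = b * N := by
    have h1 := congrArg (LinearMap.trace ℚ_[p] V) hS
    rw [map_sum] at h1
    have h2 : ∀ j, LinearMap.trace ℚ_[p] V
        (dualTensorHom ℚ_[p] V V (B.flip (w j) ⊗ₜ[ℚ_[p]] w j))
        = (∑ i, τ j i * τ j i) ^ m := by
      intro j
      rw [LinearMap.trace_eq_contract_apply, contractLeft_apply]
      simpa [hw] using hT (τ j) (τ j)
    rw [Finset.sum_congr rfl fun j _ => h2 j] at h1
    rw [map_smul, LinearMap.trace_id] at h1
    rw [hA, h1, hV, smul_eq_mul, hN]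
  -- key identity per k
  have hk : ∀ k, (∑ j, f j k) = b * (∑ i, τ k i * τ k i) ^ m := by
    intro k
    have h := congrArg (fun v => B v (w k)) (hb (w k))
    simp only [map_sum, LinearMap.sum_apply, map_smul, LinearMap.smul_apply,
      smul_eq_mul] at h
    simp only [hw, hT] at h
    rw [← h]
    refine Finset.sum_congr rfl fun j _ => ?_
    rw [hf, hsymm j k, ← pow_add, two_mul]
  -- total sum identity
  have htotal : (∑ k, ∑ j, f j k) = b * A := by
    rw [Finset.sum_congr rfl fun k _ => hk k, ← Finset.mul_sum, hA]
  -- split diagonal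
  set D : ℚ_[p] := ∑ l, (∑ i, τ l i * τ l i) ^ (2 * m) with hD
  set off : ℚ_[p] := ∑ k, ∑ j ∈ Finset.univ.erase k, f j k with hoff
  have hsplit : (∑ k, ∑ j, f j k) = D + off := by
    rw [hD, hoff, ← Finset.sum_add_distrib]
    refine Finset.sum_congr rfl fun k _ => ?_
    rw [← Finset.add_sum_erase _ _ (Finset.mem_univ k)]
  have h3 : b * A = D + off := by rw [← htotal, hsplit]
  have hAA : A * A = N * (D + off) := by
    rw [← h3, htr]; ring
  -- pick maximizing off-diagonal pair
  set s : Finset (Fin n × Fin n) := Finset.univ.filter (fun q => q.1 ≠ q.2) with hs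
  have hsne : s.Nonempty := by
    refine ⟨(⟨0, by omega⟩, ⟨1, by omega⟩), ?_⟩
    simp [hs, Fin.ext_iff]
  obtain ⟨q, hq, hqmax⟩ := s.exists_max_image (fun q => ‖∑ i, τ q.1 i * τ q.2 i‖) hsne
  have hqne : q.1 ≠ q.2 := by
    simpa [hs] using hq
  refine ⟨q.1, q.2, hqne, ?_⟩
  have hoffle : ‖off‖ ≤ ‖∑ i, τ q.1 i * τ q.2 i‖ ^ (2 * m) := by
    refine padic_norm_sum_le _ _ _ (by positivity) fun k _ => ?_
    refine padic_norm_sum_le _ _ _ (by positivity) fun j hj => ?_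
    have hjk : j ≠ k := Finset.ne_of_mem_erase hj
    have : ‖∑ i, τ j i * τ k i‖ ≤ ‖∑ i, τ q.1 i * τ q.2 i‖ :=
      hqmax (j, k) (by simp [hs, hjk])
    calc ‖f j k‖ = ‖∑ i, τ j i * τ k i‖ ^ (2 * m) := by rw [hf, norm_pow]
      _ ≤ ‖∑ i, τ q.1 i * τ q.2 i‖ ^ (2 * m) := pow_le_pow_left₀ (norm_nonneg _) this _
  calc ‖A‖ ^ 2 = ‖A * A‖ := by rw [norm_mul, sq]
    _ = ‖N‖ * ‖D + off‖ := by rw [hAA, norm_mul]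
    _ ≤ ‖N‖ * max ‖D‖ (‖∑ i, τ q.1 i * τ q.2 i‖ ^ (2 * m)) := by
        refine mul_le_mul_of_nonneg_left ?_ (norm_nonneg _)
        refine (Padic.nonarchimedean _ _).trans ?_
        exact max_le_max le_rfl hoffle
end

section
/- Let p be a prime, n, d, m ∈ ℕ. Let τ₁, …, τₙ ∈ ℚₚ^d satisfy ⟨τⱼ, τⱼ⟩ = 1 for all j, and suppose there exists b ∈ ℚₚ such that Σⱼ ⟨x, τⱼ^{⊗m}⟩ τⱼ^{⊗m} = b x for all symmetric m-tensors x ∈ Sym^m(ℚₚ^d). Then max over pairs j ≠ k of { |n|ₚ, |⟨τⱼ, τₖ⟩|ₚ^{2m} } ≥ |n|ₚ² / |C(d+m-1, m)|ₚ (the higher-order p-adic Welch bound). -/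
open Finset

/-- Higher order p-adic Welch bound. `V` plays the role of `Sym^m(ℚₚ^d)`, of
dimension `C(d+m-1, m)`, `B` the induced bilinear form and `T` the `m`-th tensor
power map, satisfying `⟨u^{⊗m}, v^{⊗m}⟩ = ⟨u, v⟩^m`. -/
theorem padic_welch_higher_order (p : ℕ) [Fact p.Prime] (n d m : ℕ) (hn : 1 < n)
    (V : Type*) [AddCommGroup V] [Module ℚ_[p] V] [FiniteDimensional ℚ_[p] V]
    (hV : Module.finrank ℚ_[p] V = (d + m - 1).choose m)
    (B : LinearMap.BilinForm ℚ_[p] V) (T : (Fin d → ℚ_[p]) → V)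
    (hT : ∀ u v : Fin d → ℚ_[p], B (T u) (T v) = (∑ i, u i * v i) ^ m)
    (τ : Fin n → Fin d → ℚ_[p]) (hτ : ∀ j, (∑ i, τ j i * τ j i) = 1) (b : ℚ_[p])
    (hb : ∀ x : V, ∑ j, B x (T (τ j)) • T (τ j) = b • x) :
    ∃ j k : Fin n, j ≠ k ∧
      ‖(n : ℚ_[p])‖ ^ 2 / ‖((d + m - 1).choose m : ℚ_[p])‖ ≤
        max ‖(n : ℚ_[p])‖ (‖∑ i, τ j i * τ k i‖ ^ (2 * m)) := by
  have hne : Nonempty (Fin n) := ⟨⟨0, by omega⟩⟩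
  set D : ℕ := (d + m - 1).choose m with hD
  by_cases hD0 : (D : ℚ_[p]) = 0
  · refine ⟨⟨0, by omega⟩, ⟨1, by omega⟩, by simp [Fin.ext_iff], ?_⟩
    rw [hD0]
    simp
  -- diagonal values
  have hdiag : ∀ k : Fin n, B (T (τ k)) (T (τ k)) = 1 := fun k => by
    rw [hT, hτ, one_pow]
  have hsym : ∀ u v, B (T u) (T v) = B (T v) (T u) := fun u v => by
    rw [hT, hT]
    congr 1
    exact Finset.sum_congr rfl fun i _ => mul_comm _ _
  -- row sums of squared Gram entries
  have h1 : ∀ k : Fin n, ∑ j, (B (T (τ k)) (T (τ j))) ^ 2 = b := by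
    intro k
    have h := congrArg (B.flip (T (τ k))) (hb (T (τ k)))
    simp only [map_sum, map_smul, LinearMap.flip_apply, LinearMap.BilinForm.flip_apply, smul_eq_mul] at h
    rw [hdiag k, mul_one] at h
    rw [← h]
    refine Finset.sum_congr rfl fun j _ => ?_
    rw [hsym (τ j) (τ k), sq]
  -- trace argument : n = b * D
  have htr : (n : ℚ_[p]) = b * D := by
    have hL : (∑ j : Fin n, dualTensorHom ℚ_[p] V V
        (B.flip (T (τ j)) ⊗ₜ[ℚ_[p]] T (τ j))) = b • (LinearMap.id (R := ℚ_[p]) (M := V)) := by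
      ext x
      simp only [LinearMap.sum_apply, dualTensorHom_apply, LinearMap.flip_apply,
        LinearMap.smul_apply, LinearMap.id_apply]
      exact hb x
    have h2 := congrArg (LinearMap.trace ℚ_[p] V) hL
    rw [map_sum] at h2
    simp only [LinearMap.trace_eq_contract_apply, contractLeft_apply, LinearMap.flip_apply, LinearMap.BilinForm.flip_apply] at h2
    rw [map_smul, LinearMap.trace_id, hV, smul_eq_mul] at h2
    simp only [hdiag] at h2
    rw [Finset.sum_const, Finset.card_univ, Fintype.card_fin, nsmul_eq_mul, mul_one] at h2
    exact h2
  have hbval : b = (n : ℚ_[p]) / D := by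
    rw [htr, mul_div_assoc, div_self hD0, mul_one]
  -- the key equation
  set S : ℚ_[p] := ∑ k : Fin n, ∑ j ∈ Finset.univ.erase k, (B (T (τ k)) (T (τ j))) ^ 2 with hS
  have hkey : (n : ℚ_[p]) * ((n : ℚ_[p]) / D) = (n : ℚ_[p]) + S := by
    have hsum : ∑ k : Fin n, ∑ j, (B (T (τ k)) (T (τ j))) ^ 2 = (n : ℚ_[p]) * b := by
      simp [h1, Finset.sum_const, nsmul_eq_mul]
    rw [← hbval, ← hsum, hS]
    have : ∀ k : Fin n, ∑ j, (B (T (τ k)) (T (τ j))) ^ 2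
        = 1 + ∑ j ∈ Finset.univ.erase k, (B (T (τ k)) (T (τ j))) ^ 2 := by
      intro k
      rw [← Finset.sum_erase_add _ _ (Finset.mem_univ k), hdiag k, one_pow, add_comm]
    rw [Finset.sum_congr rfl fun k _ => this k, Finset.sum_add_distrib]
    simp [Finset.sum_const, nsmul_eq_mul]
  -- pick the maximal off-diagonal term
  obtain ⟨k, -, hk⟩ := IsUltrametricDist.exists_norm_finset_sum_le_of_nonempty
    (Finset.univ_nonempty (α := Fin n))
    (fun k : Fin n => ∑ j ∈ Finset.univ.erase k, (B (T (τ k)) (T (τ j))) ^ 2)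
  have herase : (Finset.univ.erase k).Nonempty := by
    rw [← Finset.card_pos, Finset.card_erase_of_mem (Finset.mem_univ k), Finset.card_univ,
      Fintype.card_fin]
    omega
  obtain ⟨j, hj, hjle⟩ := IsUltrametricDist.exists_norm_finset_sum_le_of_nonempty herase
    (fun j : Fin n => (B (T (τ k)) (T (τ j))) ^ 2)
  refine ⟨k, j, (Finset.mem_erase.mp hj).1.symm, ?_⟩
  have hnorm : ‖(n : ℚ_[p])‖ ^ 2 / ‖(D : ℚ_[p])‖ = ‖(n : ℚ_[p]) * ((n : ℚ_[p]) / D)‖ := by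
    rw [norm_mul, norm_div, sq]
    ring
  rw [hnorm, hkey]
  refine le_trans (Padic.nonarchimedean _ _) (max_le_max le_rfl ?_)
  refine le_trans (hk.trans hjle) ?_
  rw [hT, ← pow_mul, norm_pow, mul_comm m 2]
end

section
/- Let τ₁, …, τₙ be unit vectors in ℂ^d with n > d. Then max over j ≠ k of |⟨τⱼ, τₖ⟩|² ≥ (n - d)/(d(n - 1)). -/
open Finset

private lemma sum_swap4' {M : Type*} [AddCommMonoid M] {ι κ α β : Type*}
    [Fintype ι] [Fintype κ] [Fintype α] [Fintype β]
    (f : ι → κ → α → β → M) :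
    ∑ j, ∑ k, ∑ a, ∑ b, f j k a b = ∑ a, ∑ b, ∑ j, ∑ k, f j k a b := by
  calc ∑ j, ∑ k, ∑ a, ∑ b, f j k a b
      = ∑ j, ∑ a, ∑ k, ∑ b, f j k a b :=
        Finset.sum_congr rfl fun j _ => Finset.sum_comm
    _ = ∑ a, ∑ j, ∑ k, ∑ b, f j k a b := Finset.sum_comm
    _ = ∑ a, ∑ j, ∑ b, ∑ k, f j k a b :=
        Finset.sum_congr rfl fun a _ => Finset.sum_congr rfl fun j _ => Finset.sum_comm
    _ = ∑ a, ∑ b, ∑ j, ∑ k, f j k a b :=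
        Finset.sum_congr rfl fun a _ => Finset.sum_comm

private lemma welch_key (n d : ℕ) (τ : Fin n → EuclideanSpace ℂ (Fin d))
    (hτ : ∀ j, ‖τ j‖ = 1) :
    (n : ℝ)^2 ≤ d * ∑ j, ∑ k, ‖(inner ℂ (τ j) (τ k) : ℂ)‖ ^ 2 := by
  set S : Fin d → Fin d → ℂ := fun a b => ∑ j, (starRingEnd ℂ) (τ j a) * τ j b with hS
  have h : ∀ j k : Fin n, (inner ℂ (τ j) (τ k) : ℂ) = ∑ a, (starRingEnd ℂ) (τ j a) * τ k a := by
    intro j k; simp [PiLp.inner_apply, RCLike.inner_apply, mul_comm]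
  -- complex identity
  have hA : ∑ j, ∑ k, ((inner ℂ (τ j) (τ k) : ℂ) * (starRingEnd ℂ) (inner ℂ (τ j) (τ k) : ℂ))
      = ∑ a, ∑ b, (S a b * (starRingEnd ℂ) (S a b)) := by
    simp only [h, hS, map_sum, map_mul, Complex.conj_conj, Finset.sum_mul_sum]
    rw [sum_swap4']
    refine Finset.sum_congr rfl fun a _ => Finset.sum_congr rfl fun b _ => ?_
    refine Finset.sum_congr rfl fun j _ => Finset.sum_congr rfl fun k _ => ?_
    ring
  -- real identity
  have hAr : ∑ j, ∑ k, ‖(inner ℂ (τ j) (τ k) : ℂ)‖ ^ 2 = ∑ a, ∑ b, ‖S a b‖ ^ 2 := by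
    have := hA
    simp only [Complex.mul_conj, ← Complex.ofReal_sum] at this
    have h2 := Complex.ofReal_injective this
    simpa [Complex.normSq_eq_norm_sq] using h2
  -- trace
  have htr : ∑ a, (S a a) = (n : ℂ) := by
    rw [hS]
    simp only
    rw [Finset.sum_comm]
    have : ∀ j : Fin n, ∑ a, (starRingEnd ℂ) (τ j a) * τ j a = 1 := by
      intro j
      have : (inner ℂ (τ j) (τ j) : ℂ) = (1 : ℂ) := by
        rw [inner_self_eq_norm_sq_to_K, hτ j]; norm_num
      rw [← h j j, this]
    simp [this]
  have htrre : ∑ a, (S a a).re = (n : ℝ) := by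
    have := congrArg Complex.re htr
    simpa [Complex.re_sum] using this
  -- Cauchy-Schwarz
  have hcs : (n : ℝ)^2 ≤ d * ∑ a, ((S a a).re)^2 := by
    rw [← htrre]
    have := sq_sum_le_card_mul_sum_sq (s := (Finset.univ : Finset (Fin d)))
      (f := fun a => (S a a).re)
    simpa using this
  have hre : ∀ a : Fin d, ((S a a).re)^2 ≤ ‖S a a‖^2 := by
    intro a
    rw [Complex.sq_norm, Complex.normSq_apply]
    nlinarith [sq_nonneg (S a a).im]
  have hdiag : ∑ a, ‖S a a‖^2 ≤ ∑ a, ∑ b, ‖S a b‖^2 := by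
    refine Finset.sum_le_sum fun a _ => ?_
    exact Finset.single_le_sum (f := fun b => ‖S a b‖^2)
      (fun b _ => by positivity) (Finset.mem_univ a)
  rw [hAr]
  calc (n:ℝ)^2 ≤ d * ∑ a, ((S a a).re)^2 := hcs
    _ ≤ d * ∑ a, ‖S a a‖^2 :=
        mul_le_mul_of_nonneg_left (Finset.sum_le_sum fun a _ => hre a) (by positivity)
    _ ≤ d * ∑ a, ∑ b, ‖S a b‖^2 := by gcongr

/-- The classical first-order Welch bound on maximal cross-correlation. -/
theorem welch_bound_first_order_max (n d : ℕ) (hnd : d < n)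
    (τ : Fin n → EuclideanSpace ℂ (Fin d)) (hτ : ∀ j, ‖τ j‖ = 1) :
    ∃ j k : Fin n, j ≠ k ∧
      ((n : ℝ) - d) / (d * ((n : ℝ) - 1)) ≤ ‖(inner ℂ (τ j) (τ k) : ℂ)‖ ^ 2 := by
  have hn0 : 0 < n := Nat.pos_of_ne_zero (by omega)
  have hd : 0 < d := by
    by_contra hd0
    have hd0' : d = 0 := by omega
    subst hd0'
    have := hτ ⟨0, hn0⟩
    have hz : τ ⟨0, hn0⟩ = 0 := Subsingleton.elim _ _
    rw [hz, norm_zero] at this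
    norm_num at this
  have hn2 : 2 ≤ n := by omega
  set c : ℝ := ((n : ℝ) - d) / (d * ((n : ℝ) - 1)) with hc
  by_contra hcon
  push_neg at hcon
  have hkey := welch_key n d τ hτ
  -- diagonal values are 1
  have hdiag : ∀ j : Fin n, ‖(inner ℂ (τ j) (τ j) : ℂ)‖ ^ 2 = 1 := by
    intro j
    have : (inner ℂ (τ j) (τ j) : ℂ) = (1 : ℂ) := by
      rw [inner_self_eq_norm_sq_to_K, hτ j]; norm_num
    rw [this]; norm_num
  have hd1 : (1:ℝ) ≤ (n:ℝ) - 1 := by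
    have : (2:ℝ) ≤ n := by exact_mod_cast hn2
    linarith
  have hdn1 : (0:ℝ) < (d:ℝ) * ((n:ℝ) - 1) := by
    have : (0:ℝ) < (d:ℝ) := by exact_mod_cast hd
    nlinarith
  -- strict sum bound
  have p0 : Fin n := ⟨0, hn0⟩
  have p1 : Fin n := ⟨1, hn2⟩
  have hlt : ∑ p : Fin n × Fin n, ‖(inner ℂ (τ p.1) (τ p.2) : ℂ)‖ ^ 2
      < ∑ p : Fin n × Fin n, (if p.1 = p.2 then (1:ℝ) else c) := by
    refine Finset.sum_lt_sum (fun p _ => ?_) ⟨(⟨0, hn0⟩, ⟨1, hn2⟩), Finset.mem_univ _, ?_⟩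
    · by_cases hp : p.1 = p.2
      · rw [if_pos hp, ← hp, hdiag]
      · rw [if_neg hp]
        exact (hcon p.1 p.2 hp).le
    · have hne : (⟨0, hn0⟩ : Fin n) ≠ ⟨1, hn2⟩ := by
        intro hEq; simpa using congrArg Fin.val hEq
      rw [if_neg hne]
      exact hcon _ _ hne
  -- compute rhs
  have hrhs : ∑ p : Fin n × Fin n, (if p.1 = p.2 then (1:ℝ) else c)
      = n * (1 + ((n:ℝ) - 1) * c) := by
    rw [Fintype.sum_prod_type]
    have : ∀ j : Fin n, ∑ k : Fin n, (if j = k then (1:ℝ) else c)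
        = 1 + ((n:ℝ) - 1) * c := by
      intro j
      have : ∀ k : Fin n, (if j = k then (1:ℝ) else c)
          = (if j = k then (1:ℝ) - c else 0) + c := by
        intro k; by_cases h : j = k <;> simp [h]
      simp only [this, Finset.sum_add_distrib, Finset.sum_ite_eq, Finset.mem_univ, if_pos,
        Finset.sum_const, Finset.card_univ, Fintype.card_fin, nsmul_eq_mul]
      ring
    simp only [this, Finset.sum_const, Finset.card_univ, Fintype.card_fin, nsmul_eq_mul]
  have hflat : ∑ j, ∑ k, ‖(inner ℂ (τ j) (τ k) : ℂ)‖ ^ 2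
      = ∑ p : Fin n × Fin n, ‖(inner ℂ (τ p.1) (τ p.2) : ℂ)‖ ^ 2 := by
    rw [Fintype.sum_prod_type]
  rw [hflat] at hkey
  have hc' : (d:ℝ) * ((n:ℝ) - 1) * c = (n:ℝ) - d := by
    rw [hc]; field_simp
  have hfinal : (d:ℝ) * ((n:ℝ)) * (1 + ((n:ℝ) - 1) * c) = (n:ℝ)^2 := by
    have : (d:ℝ) * (1 + ((n:ℝ) - 1) * c) = d + ((n:ℝ) - d) := by
      rw [← hc']; ring
    nlinarith [this]
  have hdpos : (0:ℝ) < (d:ℝ) := by exact_mod_cast hd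
  nlinarith [hkey, hlt, hrhs, hfinal, hdpos]
end

section
/- Let τ₁, …, τₙ be unit vectors in ℂ^d with n > d and let m ∈ ℕ, m ≥ 1. Then max over j ≠ k of |⟨τⱼ, τₖ⟩|^{2m} ≥ (1/(n-1)) · ( n / C(d+m-1, m) − 1 ). -/
open Finset

set_option maxHeartbeats 1000000 in
private lemma welch_core {n : ℕ} {ι : Type*} [Fintype ι] (a : Fin n → ι → ℂ) :
    (∑ s : ι, ∑ j, Complex.normSq (a j s)) ^ 2 ≤
      (Fintype.card ι : ℝ) *
        ∑ j, ∑ k, Complex.normSq (∑ s, (starRingEnd ℂ) (a j s) * a k s) := by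
  classical
  set c := starRingEnd ℂ with hc
  set B : ι → ι → ℂ := fun s t => ∑ j, a j s * c (a j t) with hB
  have hre : ∀ w : ℂ, Complex.normSq w = (w * c w).re := by
    intro w; rw [hc, Complex.mul_conj]; simp
  have h1 : ∑ j, ∑ k, Complex.normSq (∑ s, c (a j s) * a k s)
      = ∑ s, ∑ t, Complex.normSq (B s t) := by
    have hC : ∑ j, ∑ k, ((∑ s, c (a j s) * a k s) * c (∑ s, c (a j s) * a k s))
        = ∑ s, ∑ t, (B s t * c (B s t)) := by
      have hL : ∀ j k : Fin n, (∑ s, c (a j s) * a k s) * c (∑ s, c (a j s) * a k s)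
          = ∑ s, ∑ t, c (a j s) * a k s * (a j t * c (a k t)) := by
        intro j k
        rw [map_sum, Finset.sum_mul_sum]
        refine Finset.sum_congr rfl fun s _ => Finset.sum_congr rfl fun t _ => ?_
        simp [hc, map_mul, Complex.conj_conj]
      have hR : ∀ s t : ι, B s t * c (B s t)
          = ∑ j, ∑ k, a j s * c (a j t) * (c (a k s) * a k t) := by
        intro s t
        rw [hB, map_sum, Finset.sum_mul_sum]
        refine Finset.sum_congr rfl fun j _ => Finset.sum_congr rfl fun k _ => ?_
        simp [hc, map_mul, Complex.conj_conj]
      simp only [hL, hR]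
      calc ∑ j, ∑ k, ∑ s, ∑ t : ι, c (a j s) * a k s * (a j t * c (a k t))
          = ∑ j, ∑ s, ∑ k, ∑ t : ι, c (a j s) * a k s * (a j t * c (a k t)) :=
            Finset.sum_congr rfl fun j _ => Finset.sum_comm
        _ = ∑ s, ∑ j, ∑ k, ∑ t : ι, c (a j s) * a k s * (a j t * c (a k t)) :=
            Finset.sum_comm
        _ = ∑ s, ∑ j, ∑ t : ι, ∑ k, c (a j s) * a k s * (a j t * c (a k t)) :=
            Finset.sum_congr rfl fun s _ => Finset.sum_congr rfl fun j _ => Finset.sum_comm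
        _ = ∑ s, ∑ t : ι, ∑ j, ∑ k, c (a j s) * a k s * (a j t * c (a k t)) :=
            Finset.sum_congr rfl fun s _ => Finset.sum_comm
        _ = ∑ s, ∑ t : ι, ∑ j, ∑ k, a j s * c (a j t) * (c (a k s) * a k t) := by
            refine Finset.sum_congr rfl fun s _ => Finset.sum_congr rfl fun t _ => ?_
            rw [Finset.sum_comm]
            exact Finset.sum_congr rfl fun j _ => Finset.sum_congr rfl fun k _ => by ring
    simp only [hre]
    have h := congrArg Complex.re hC
    simp only [Complex.re_sum] at h
    exact h
  rw [h1]
  have h2 : ∑ s, Complex.normSq (B s s) ≤ ∑ s, ∑ t, Complex.normSq (B s t) :=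
    Finset.sum_le_sum fun s _ =>
      Finset.single_le_sum (fun t _ => Complex.normSq_nonneg _) (Finset.mem_univ s)
  have h3 : ∀ s, Complex.normSq (B s s) = (∑ j, Complex.normSq (a j s)) ^ 2 := by
    intro s
    have hBs : B s s = ((∑ j, Complex.normSq (a j s) : ℝ) : ℂ) := by
      rw [hB]
      push_cast
      exact Finset.sum_congr rfl fun j _ => (Complex.mul_conj _)
    rw [hBs, Complex.normSq_ofReal, sq]
  calc (∑ s : ι, ∑ j, Complex.normSq (a j s)) ^ 2
      ≤ (Finset.univ : Finset ι).card * ∑ s : ι, (∑ j, Complex.normSq (a j s)) ^ 2 :=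
        sq_sum_le_card_mul_sum_sq
    _ = (Fintype.card ι : ℝ) * ∑ s, Complex.normSq (B s s) := by
        simp [h3, Finset.card_univ]
    _ ≤ (Fintype.card ι : ℝ) * ∑ s, ∑ t, Complex.normSq (B s t) :=
        mul_le_mul_of_nonneg_left h2 (by positivity)

set_option maxHeartbeats 1000000 in
/-- The classical higher-order Welch bound on maximal cross-correlation. -/
theorem welch_bound_higher_order_max (n d m : ℕ) (hm : 1 ≤ m) (hnd : d < n)
    (τ : Fin n → EuclideanSpace ℂ (Fin d)) (hτ : ∀ j, ‖τ j‖ = 1) :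
    ∃ j k : Fin n, j ≠ k ∧
      (1 / ((n : ℝ) - 1)) * ((n : ℝ) / ((d + m - 1).choose m : ℝ) - 1) ≤
        ‖(inner ℂ (τ j) (τ k) : ℂ)‖ ^ (2 * m) := by
  classical
  rcases Nat.eq_zero_or_pos d with hd | hd
  · exfalso
    have h1 := hτ ⟨0, by omega⟩
    subst hd
    have h0 : τ ⟨0, by omega⟩ = 0 := Subsingleton.elim _ _
    rw [h0, norm_zero] at h1
    norm_num at h1
  have hn2 : 2 ≤ n := by omega
  set r : ℕ := (d + m - 1).choose m with hr
  have hrpos : 0 < r := Nat.choose_pos (by omega)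
  have hcard : Fintype.card (Sym (Fin d) m) = r := by
    rw [Sym.card_sym_eq_choose, Fintype.card_fin]
  let μ : (Fin m → Fin d) → Sym (Fin d) m := fun f => ⟨Multiset.map f Finset.univ.val, by simp⟩
  let cnt : Sym (Fin d) m → ℕ := fun s => (Finset.univ.filter fun f => μ f = s).card
  let p : Fin n → Sym (Fin d) m → ℂ := fun j s => ((s : Multiset (Fin d)).map (τ j)).prod
  let a : Fin n → Sym (Fin d) m → ℂ := fun j s => (Real.sqrt (cnt s) : ℂ) * p j s
  have hprod : ∀ (j : Fin n) (f : Fin m → Fin d), p j (μ f) = ∏ i, τ j (f i) := by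
    intro j f
    show (Multiset.map (τ j) (Multiset.map f Finset.univ.val)).prod = _
    rw [Multiset.map_map]
    rfl
  have hG : ∀ j k : Fin n, ∑ s, (starRingEnd ℂ) (a j s) * a k s
      = (inner ℂ (τ j) (τ k) : ℂ) ^ m := by
    intro j k
    have h1 : ∀ s, (starRingEnd ℂ) (a j s) * a k s
        = (cnt s : ℂ) * ((starRingEnd ℂ) (p j s) * p k s) := by
      intro s
      simp only [a, map_mul, Complex.conj_ofReal]
      have hss : (Real.sqrt (cnt s) : ℂ) * Real.sqrt (cnt s) = (cnt s : ℂ) := by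
        rw [← Complex.ofReal_mul, Real.mul_self_sqrt (Nat.cast_nonneg _)]
        norm_cast
      calc (Real.sqrt (cnt s) : ℂ) * (starRingEnd ℂ) (p j s) *
            ((Real.sqrt (cnt s) : ℂ) * p k s)
          = ((Real.sqrt (cnt s) : ℂ) * Real.sqrt (cnt s)) *
            ((starRingEnd ℂ) (p j s) * p k s) := by ring
        _ = _ := by rw [hss]
    calc ∑ s, (starRingEnd ℂ) (a j s) * a k s
        = ∑ s, ∑ _f ∈ Finset.univ.filter (fun f => μ f = s),
            ((starRingEnd ℂ) (p j s) * p k s) := by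
          refine Finset.sum_congr rfl fun s _ => ?_
          rw [h1, Finset.sum_const, nsmul_eq_mul]
      _ = ∑ f : Fin m → Fin d, (starRingEnd ℂ) (p j (μ f)) * p k (μ f) :=
          Finset.sum_fiberwise' _ _ _
      _ = ∑ f : Fin m → Fin d, ∏ i, (starRingEnd ℂ) (τ j (f i)) * τ k (f i) := by
          refine Finset.sum_congr rfl fun f _ => ?_
          rw [hprod, hprod, map_prod, ← Finset.prod_mul_distrib]
      _ = (∑ x, (starRingEnd ℂ) (τ j x) * τ k x) ^ m :=
          (Fintype.sum_pow (fun x => (starRingEnd ℂ) (τ j x) * τ k x) m).symm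
      _ = (inner ℂ (τ j) (τ k) : ℂ) ^ m := by
          rw [PiLp.inner_apply]
          simp [RCLike.inner_apply, mul_comm]
  have hinner_diag : ∀ j : Fin n, (inner ℂ (τ j) (τ j) : ℂ) = 1 := by
    intro j
    rw [inner_self_eq_norm_sq_to_K, hτ j]
    norm_num
  have hwt : ∑ s : Sym (Fin d) m, ∑ j, Complex.normSq (a j s) = n := by
    rw [Finset.sum_comm]
    have hj : ∀ j : Fin n, ∑ s : Sym (Fin d) m, Complex.normSq (a j s) = 1 := by
      intro j
      have h2 : ((∑ s : Sym (Fin d) m, Complex.normSq (a j s) : ℝ) : ℂ)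
          = ∑ s, (starRingEnd ℂ) (a j s) * a j s := by
        push_cast
        refine Finset.sum_congr rfl fun s _ => ?_
        rw [mul_comm, Complex.mul_conj]
      rw [hG j j, hinner_diag j, one_pow] at h2
      exact_mod_cast h2
    simp [hj]
  have hcore := welch_core a
  rw [hwt, hcard] at hcore
  have hGnorm : ∀ j k : Fin n,
      Complex.normSq (∑ s, (starRingEnd ℂ) (a j s) * a k s)
      = ‖(inner ℂ (τ j) (τ k) : ℂ)‖ ^ (2 * m) := by
    intro j k
    rw [hG, ← Complex.sq_norm, norm_pow, ← pow_mul, mul_comm m 2]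
  simp only [hGnorm] at hcore
  have hdiag : ∀ j : Fin n, ‖(inner ℂ (τ j) (τ j) : ℂ)‖ ^ (2 * m) = 1 := by
    intro j
    rw [hinner_diag j]
    simp
  have hsplit : ∑ j, ∑ k, ‖(inner ℂ (τ j) (τ k) : ℂ)‖ ^ (2 * m)
      = (n : ℝ) + ∑ q ∈ (Finset.univ : Finset (Fin n)).offDiag,
          ‖(inner ℂ (τ q.1) (τ q.2) : ℂ)‖ ^ (2 * m) := by
    rw [← Finset.sum_product']
    rw [show (Finset.univ : Finset (Fin n)) ×ˢ (Finset.univ : Finset (Fin n))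
        = (Finset.univ : Finset (Fin n)).diag ∪ (Finset.univ : Finset (Fin n)).offDiag from
        (Finset.diag_union_offDiag _).symm]
    rw [Finset.sum_union (Finset.disjoint_diag_offDiag _), Finset.sum_diag]
    congr 1
    rw [Finset.sum_congr rfl fun j _ => hdiag j]
    simp
  rw [hsplit] at hcore
  have hne : ((Finset.univ : Finset (Fin n)).offDiag).Nonempty := by
    refine ⟨(⟨0, by omega⟩, ⟨1, by omega⟩), Finset.mem_offDiag.2 ⟨Finset.mem_univ _,
      Finset.mem_univ _, ?_⟩⟩
    simp [Fin.ext_iff]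
  obtain ⟨q, hq, hqmax⟩ := Finset.exists_max_image _
    (fun q : Fin n × Fin n => ‖(inner ℂ (τ q.1) (τ q.2) : ℂ)‖ ^ (2 * m)) hne
  refine ⟨q.1, q.2, (Finset.mem_offDiag.1 hq).2.2, ?_⟩
  set M : ℝ := ‖(inner ℂ (τ q.1) (τ q.2) : ℂ)‖ ^ (2 * m) with hM
  have hsum_le : ∑ x ∈ (Finset.univ : Finset (Fin n)).offDiag,
      ‖(inner ℂ (τ x.1) (τ x.2) : ℂ)‖ ^ (2 * m) ≤ ((n : ℝ) * n - n) * M := by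
    have hcs := Finset.sum_le_card_nsmul _
      (fun q : Fin n × Fin n => ‖(inner ℂ (τ q.1) (τ q.2) : ℂ)‖ ^ (2 * m)) M hqmax
    rw [Finset.offDiag_card, Finset.card_univ, Fintype.card_fin] at hcs
    calc ∑ x ∈ (Finset.univ : Finset (Fin n)).offDiag,
        ‖(inner ℂ (τ x.1) (τ x.2) : ℂ)‖ ^ (2 * m)
        ≤ ((n * n - n : ℕ) : ℝ) * M := by
          rw [← nsmul_eq_mul]; exact_mod_cast hcs
      _ = ((n : ℝ) * n - n) * M := by
          congr 1
          have hle : n ≤ n * n := Nat.le_mul_of_pos_left n (by omega)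
          push_cast [Nat.cast_sub hle]
          ring
  have hM0 : 0 ≤ M := by positivity
  have hrR : (0:ℝ) < r := by exact_mod_cast hrpos
  have hnR : (2:ℝ) ≤ n := by exact_mod_cast hn2
  have hkey : (n:ℝ)^2 ≤ (r : ℝ) * ((n : ℝ) + ((n : ℝ) * n - n) * M) := by
    calc (n:ℝ)^2 ≤ (r : ℝ) * ((n : ℝ) + ∑ q ∈ (Finset.univ : Finset (Fin n)).offDiag,
          ‖(inner ℂ (τ q.1) (τ q.2) : ℂ)‖ ^ (2 * m)) := hcore
      _ ≤ _ := by
          apply mul_le_mul_of_nonneg_left _ (le_of_lt hrR)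
          linarith [hsum_le]
  show (1 / ((n : ℝ) - 1)) * ((n : ℝ) / (r : ℝ) - 1) ≤ M
  rw [div_mul_eq_mul_div, one_mul, div_le_iff₀ (by linarith)]
  rw [div_sub' (ne_of_gt hrR), div_le_iff₀ hrR]
  nlinarith [hM0, hrR, hnR, hkey]
end

section
/- Let K be a field with a non-Archimedean absolute value |·|, let d, n ≥ 1 with the image of d nonzero in K, and let τ₁, …, τₙ ∈ K^d satisfy ⟨τⱼ, τⱼ⟩ = 1 (with ⟨(aⱼ),(bⱼ)⟩ = Σ aⱼbⱼ) and Σⱼ ⟨x, τⱼ⟩ τⱼ = b x for all x ∈ K^d, for some b ∈ K. Then max over pairs j ≠ k of { |n|, |⟨τⱼ, τₖ⟩|² } ≥ |n|²/|d|. -/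
open Finset

lemma nonarch_sum_le {K : Type*} [Field K] (v : AbsoluteValue K ℝ)
    (hv : IsNonarchimedean v) {β : Type*} (g : β → K) {t : Finset β}
    (ht : t.Nonempty) : ∃ c ∈ t, v (∑ x ∈ t, g x) ≤ v (g c) := by
  induction t using Finset.cons_induction_on with
  | empty => exact absurd ht (by simp)
  | @cons a s ha ih =>
    rcases s.eq_empty_or_nonempty with rfl | hs
    · exact ⟨a, by simp⟩
    · obtain ⟨c, hc, hcle⟩ := ih hs
      rw [Finset.sum_cons]
      rcases le_total (v (g a)) (v (g c)) with h | h
      · exact ⟨c, Finset.mem_cons_of_mem hc,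
          le_trans (hv _ _) (max_le h hcle)⟩
      · exact ⟨a, Finset.mem_cons_self a s,
          le_trans (hv _ _) (max_le le_rfl (hcle.trans h))⟩

/-- First-order Welch bound over an arbitrary field with a non-Archimedean
absolute value. -/
theorem nonarch_welch_first_order (K : Type*) [Field K]
    (v : AbsoluteValue K ℝ) (hv : IsNonarchimedean v)
    (n d : ℕ) (hn : 1 < n) (hd : 1 ≤ d) (hdK : (d : K) ≠ 0)
    (τ : Fin n → Fin d → K)
    (hτ : ∀ j, (∑ i, τ j i * τ j i) = 1) (b : K)
    (hb : ∀ x : Fin d → K, ∑ j, (∑ i, x i * τ j i) • τ j = b • x) :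
    ∃ j k : Fin n, j ≠ k ∧
      v (n : K) ^ 2 / v (d : K) ≤ max (v (n : K)) (v (∑ i, τ j i * τ k i) ^ 2) := by
  haveI : NeZero n := ⟨by omega⟩
  set G : Fin n → Fin n → K := fun j k => ∑ i, τ j i * τ k i with hG
  -- Key frame relation on components
  have key : ∀ i i' : Fin d, (∑ j, τ j i * τ j i') = if i' = i then b else 0 := by
    intro i i'
    have h := congrFun (hb (Pi.single i 1)) i'
    simp only [Finset.sum_apply, Pi.smul_apply, smul_eq_mul, Pi.single_apply,
      ite_mul, one_mul, zero_mul, Finset.sum_ite_eq', Finset.mem_univ,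
      if_true, mul_ite, mul_one, mul_zero] at h
    exact h
  -- trace : n = b * d
  have htr : (n : K) = b * d := by
    have h1 : (∑ i : Fin d, ∑ j : Fin n, τ j i * τ j i) = b * d := by
      simp only [key]
      simp [mul_comm]
    have h2 : (∑ i : Fin d, ∑ j : Fin n, τ j i * τ j i) = n := by
      rw [Finset.sum_comm]
      simp [hτ]
    rw [← h1, h2]
  -- row sums of squares of the Gram matrix
  have hrow : ∀ j, (∑ k, G j k * G j k) = b := by
    intro j
    have h := hb (τ j)
    have h2 : ∀ i, (∑ k, G j k * τ k i) = b * τ j i := by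
      intro i
      have := congrFun h i
      simpa [Finset.sum_apply, smul_eq_mul, hG] using this
    have h3 : (∑ i, τ j i * (∑ k, G j k * τ k i)) = b := by
      simp only [h2]
      calc (∑ i, τ j i * (b * τ j i)) = b * ∑ i, τ j i * τ j i := by
            rw [Finset.mul_sum]; congr 1; ext i; ring
        _ = b := by rw [hτ j, mul_one]
    calc (∑ k, G j k * G j k)
        = ∑ k, G j k * ∑ i, τ j i * τ k i := by rfl
      _ = ∑ k, ∑ i, τ j i * (G j k * τ k i) := by
            congr 1; ext k; rw [Finset.mul_sum]; congr 1; ext i; ring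
      _ = ∑ i, τ j i * ∑ k, G j k * τ k i := by
            rw [Finset.sum_comm]; congr 1; ext i; rw [Finset.mul_sum]
      _ = b := h3
  -- total sum
  have htot : (∑ j, ∑ k, G j k * G j k) = n * b := by
    simp [hrow, Finset.sum_const, mul_comm]
  -- split off the diagonal
  set T : K := ∑ p ∈ Finset.univ.filter (fun p : Fin n × Fin n => p.1 ≠ p.2),
      G p.1 p.2 * G p.1 p.2 with hT
  have hsplit : (n : K) * b = (n : K) + T := by
    rw [← htot]
    rw [← Finset.sum_product', Finset.univ_product_univ,
      ← Finset.sum_filter_add_sum_filter_not (Finset.univ) (fun p : Fin n × Fin n => p.1 = p.2)]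
    congr 1
    · have : Finset.univ.filter (fun p : Fin n × Fin n => p.1 = p.2)
          = Finset.univ.image (fun j : Fin n => (j, j)) := by
        ext p
        cases p
        aesop
      rw [this, Finset.sum_image (by intro a _ c _ h; simpa using (Prod.ext_iff.mp h).1)]
      have : ∀ j : Fin n, G j j = 1 := fun j => hτ j
      simp [this]
  -- valuation facts
  have hvd : 0 < v (d : K) := v.pos hdK
  have hvn : (0:ℝ) ≤ v (n : K) := v.nonneg _
  have hbval : v b * v (d : K) = v (n : K) := by
    rw [← v.map_mul, ← htr]
  have hnb : v ((n : K) * b) = v (n : K) ^ 2 / v (d : K) := by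
    rw [v.map_mul]
    field_simp [← hbval]
    rw [mul_assoc, hbval, sq]
  -- offdiagonal nonempty
  have hne : (Finset.univ.filter (fun p : Fin n × Fin n => p.1 ≠ p.2)).Nonempty := by
    refine ⟨(⟨0, by omega⟩, ⟨1, by omega⟩), ?_⟩
    simp [Finset.mem_filter, Fin.ext_iff]
  obtain ⟨⟨j, k⟩, hmem, hle⟩ :=
    nonarch_sum_le v hv (fun p : Fin n × Fin n => G p.1 p.2 * G p.1 p.2) hne
  simp only [Finset.mem_filter, Finset.mem_univ, true_and] at hmem
  refine ⟨j, k, hmem, ?_⟩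
  have hfinal : v ((n : K) * b) ≤ max (v (n : K)) (v (G j k) ^ 2) := by
    rw [hsplit]
    refine le_trans (hv _ _) (max_le_max le_rfl ?_)
    rw [hT]
    refine hle.trans ?_
    rw [v.map_mul, sq]
  rw [← hnb]
  exact hfinal
end
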